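/- Let (A, m) be a Noetherian local domain, I_1, I_2, ... a sequence of nonzero ideals with lim_{n→∞} I_n = 0 in the m-adic topology, P = ∏_n A/I_n, and S̄ the m-adic closure of the direct sum S = ⊕_n A/I_n inside P. Then S̄ = {(a_n + I_n)_n ∈ P : a_n → 0 in the m-adic topology}, and P/S̄ is a flat A-module. -/

import Mathlib

/-!
Since `mʳ` is finitely generated, `mʳP` consists of the sequences all of whose terms lie in
`mʳ(A/Iₙ)`, so `S + mʳP` is the set of sequences whose tail lies in `mʳ(A/Iₙ)`; intersecting over
`r` gives the null sequences.

For flatness, `Iₙ → 0` makes `P/S̄` isomorphic to `A^ℕ/c₀`, where `c₀` is the module of `m`-adic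
null sequences of `A`. Over a Noetherian ring `A^ℕ` is flat, because the syzygies of finitely many
elements form a finitely generated module, so a relation in `A^ℕ` is trivialized coordinatewise by
one finite set of generators. A quotient `M/N` of a flat module is flat as soon as
`N ∩ JM = JN` for every finitely generated ideal `J`, and for `c₀ ⊆ A^ℕ` this is Artin–Rees:
if `aₙ ∈ J ∩ m^ρₙ` then `aₙ ∈ J·m^(ρₙ-k)`, so `a` is a `J`-combination of null sequences.
-/

open Filter Set

/-- The submodule of `P = ∏ₙ A/Iₙ` consisting of sequences `(aₙ + Iₙ)ₙ` with `aₙ → 0` in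
the `m`-adic topology: for each `i`, the `n`-th coordinate lies in `mⁱ·(A/Iₙ)` for all
sufficiently large `n`. -/
def nullSequencesQuot (A : Type u) [CommRing A] (m : Ideal A) (I : ℕ → Ideal A) :
    Submodule A ((n : ℕ) → A ⧸ I n) where
  carrier := {a | ∀ i : ℕ, ∃ N : ℕ, ∀ n ≥ N, a n ∈ (m ^ i • (⊤ : Submodule A (A ⧸ I n)))}
  add_mem' := by
    intro a b ha hb i
    obtain ⟨N₁, h₁⟩ := ha i
    obtain ⟨N₂, h₂⟩ := hb i
    exact ⟨max N₁ N₂, fun n hn =>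
      add_mem (h₁ n (le_trans (le_max_left _ _) hn)) (h₂ n (le_trans (le_max_right _ _) hn))⟩
  zero_mem' := fun i => ⟨0, fun n _ => zero_mem _⟩
  smul_mem' := by
    intro c a ha i
    obtain ⟨N, h⟩ := ha i
    exact ⟨N, fun n hn => Submodule.smul_mem _ c (h n hn)⟩

section Membership

variable {R M : Type*} [CommRing R] [AddCommGroup M] [Module R M]

theorem Submodule.mem_span_range_smul_iff {ι : Type*} [Fintype ι] (f : ι → R)
    (N : Submodule R M) {x : M} :
    x ∈ Ideal.span (range f) • N ↔ ∃ u : ι → M, (∀ i, u i ∈ N) ∧ ∑ i, f i • u i = x := by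
  constructor
  · intro hx
    refine Submodule.smul_induction_on hx (fun r hr y hy => ?_) ?_
    · obtain ⟨c, rfl⟩ := Ideal.mem_span_range_iff_exists_fun.mp hr
      refine ⟨fun i => c i • y, fun i => N.smul_mem _ hy, ?_⟩
      simp only [Finset.sum_smul, smul_smul, mul_comm]
    · rintro _ _ ⟨u, hu, rfl⟩ ⟨v, hv, rfl⟩
      exact ⟨u + v, fun i => add_mem (hu i) (hv i), by simp [smul_add, Finset.sum_add_distrib]⟩
  · rintro ⟨u, hu, rfl⟩
    exact Submodule.sum_mem _ fun i _ =>
      Submodule.smul_mem_smul (Ideal.subset_span ⟨i, rfl⟩) (hu i)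

theorem Submodule.mem_smul_top_pi_iff {ι : Type*} {φ : ι → Type*} [∀ i, AddCommGroup (φ i)]
    [∀ i, Module R (φ i)] {J : Ideal R} (hJ : J.FG) {x : ∀ i, φ i} :
    x ∈ J • (⊤ : Submodule R (∀ i, φ i)) ↔ ∀ i, x i ∈ J • (⊤ : Submodule R (φ i)) := by
  obtain ⟨l, f, hf⟩ := Submodule.fg_iff_exists_fin_generating_family.mp hJ
  rw [show J = Ideal.span (range f) from hf.symm]
  simp only [Submodule.mem_span_range_smul_iff, Submodule.mem_top, implies_true, true_and]
  constructor
  · rintro ⟨u, rfl⟩ i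
    exact ⟨fun j => u j i, by simp [Finset.sum_apply]⟩
  · intro hx
    choose u hu using hx
    exact ⟨fun j i => u i j, funext fun i => by simp [Finset.sum_apply, hu]⟩

theorem Submodule.Quotient.mk_mem_smul_top_iff {J K : Ideal R} {x : R} :
    (Submodule.Quotient.mk x : R ⧸ J) ∈ K • (⊤ : Submodule R (R ⧸ J)) ↔ x ∈ K ⊔ J := by
  rw [Ideal.smul_top_eq_map, Submodule.restrictScalars_mem, Ideal.Quotient.algebraMap_eq]
  exact Ideal.mem_quotient_iff_mem_sup

theorem Submodule.mem_iSup_range_single_iff {ι : Type*} {φ : ι → Type*}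
    [∀ i, AddCommGroup (φ i)] [∀ i, Module R (φ i)] [DecidableEq ι] {x : ∀ i, φ i} :
    x ∈ ⨆ i, LinearMap.range (LinearMap.single R φ i) ↔ {i | x i ≠ 0}.Finite := by
  constructor
  · intro hx
    refine Submodule.iSup_induction (motive := fun x => {i | x i ≠ 0}.Finite) _ hx ?_ (by simp) ?_
    · rintro i _ ⟨v, rfl⟩
      refine (Set.finite_singleton i).subset fun j hj => ?_
      by_contra hji
      exact hj (Pi.single_eq_of_ne hji v)
    · intro x y hx hy
      refine (hx.union hy).subset fun i hi => ?_
      by_contra h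
      simp_all
  · intro hx
    have : x = ∑ i ∈ hx.toFinset, LinearMap.single R φ i (x i) := by
      funext j
      by_cases hj : x j = 0 <;> simp [Finset.sum_apply, hj]
    rw [this]
    exact Submodule.sum_mem _ fun i _ => Submodule.mem_iSup_of_mem i ⟨x i, rfl⟩

end Membership

namespace Module.Flat

variable {R : Type*} [CommRing R]

theorem pi_of_isNoetherianRing [IsNoetherianRing R] (ι : Type*) : Flat R (ι → R) := by
  refine of_forall_isTrivialRelation fun {l f x} hfx => ?_
  obtain ⟨k, v, hv⟩ := Submodule.fg_iff_exists_fin_generating_family.mp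
    (IsNoetherian.noetherian (LinearMap.ker (Fintype.linearCombination R f)))
  have hsyz : ∀ n, (fun i => x i n) ∈ Submodule.span R (range v) := fun n => by
    rw [hv, LinearMap.mem_ker, Fintype.linearCombination_apply]
    simpa [Finset.sum_apply, mul_comm] using congrFun hfx n
  choose c hc using fun n => (Submodule.mem_span_range_iff_exists_fun R).mp (hsyz n)
  refine ⟨k, fun i j => v j i, fun j n => c n j, fun i => funext fun n => ?_, fun j => ?_⟩
  · simpa [Finset.sum_apply, mul_comm] using (congrFun (hc n) i).symm
  · have hvj : v j ∈ LinearMap.ker (Fintype.linearCombination R f) :=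
      hv ▸ Submodule.subset_span ⟨j, rfl⟩
    simpa [Fintype.linearCombination_apply, mul_comm] using hvj

theorem quotient_of_inf_smul_le {M : Type*} [AddCommGroup M] [Module R M] [Flat R M]
    (N : Submodule R M) (hN : ∀ J : Ideal R, J.FG → N ⊓ J • ⊤ ≤ J • N) : Flat R (M ⧸ N) := by
  refine of_forall_isTrivialRelation fun {l f x} hfx => ?_
  choose X hX using fun i => N.mkQ_surjective (x i)
  have hsum : ∑ i, f i • X i ∈ N ⊓ Ideal.span (range f) • ⊤ := by
    refine Submodule.mem_inf.mpr
      ⟨?_, (Submodule.mem_span_range_smul_iff f ⊤).mpr ⟨X, fun _ => trivial, rfl⟩⟩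
    rw [← Submodule.Quotient.mk_eq_zero, ← Submodule.mkQ_apply]
    simpa [hX] using hfx
  obtain ⟨u, hu, hfu⟩ := (Submodule.mem_span_range_smul_iff f N).mp
    (hN _ (Submodule.fg_span (finite_range f)) hsum)
  have hsyz : ∑ i, f i • (X i - u i) = 0 := by
    simp [smul_sub, Finset.sum_sub_distrib, hfu]
  obtain ⟨k, a, y, hay, ha⟩ := isTrivialRelation_of_sum_smul_eq_zero hsyz
  refine ⟨k, a, N.mkQ ∘ y, fun i => ?_, ha⟩
  calc x i = N.mkQ (X i - u i) := by
        rw [map_sub, hX, N.mkQ_apply, (Submodule.Quotient.mk_eq_zero N).mpr (hu i), sub_zero]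
    _ = _ := by simp [hay]

end Module.Flat

theorem Ideal.exists_pow_inf_le_mul_pow_sub {A : Type*} [CommRing A] [IsNoetherianRing A]
    (m J : Ideal A) :
    ∃ k, ∀ n, m ^ n ⊓ J ≤ J * m ^ (n - k) := by
  obtain ⟨k, hk⟩ := m.exists_pow_inf_eq_pow_smul (J : Submodule A A)
  refine ⟨k, fun n => ?_⟩
  rcases le_or_gt k n with hkn | hnk
  · have h := hk n hkn
    simp only [smul_eq_mul, Ideal.mul_top] at h
    rw [h, mul_comm]
    exact Ideal.mul_mono_left inf_le_right
  · rw [Nat.sub_eq_zero_of_le hnk.le, pow_zero, Ideal.one_eq_top, Ideal.mul_top]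
    exact inf_le_right

section NullSequences

variable {A : Type*} [CommRing A]

def nullSequences (m : Ideal A) : Submodule A (ℕ → A) where
  carrier := {a | ∀ i : ℕ, ∀ᶠ n in atTop, a n ∈ m ^ i}
  add_mem' ha hb i := ((ha i).and (hb i)).mono fun _ h => add_mem h.1 h.2
  zero_mem' _ := Eventually.of_forall fun _ => zero_mem _
  smul_mem' c _ ha i := (ha i).mono fun _ h => Ideal.mul_mem_left _ c h

theorem exists_tendsto_atTop_forall_mem_pow {m : Ideal A} {a : ℕ → A}
    (ha : a ∈ nullSequences m) : ∃ ρ : ℕ → ℕ, Tendsto ρ atTop atTop ∧ ∀ n, a n ∈ m ^ ρ n := by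
  classical
  have h₀ : ∀ n, a n ∈ m ^ 0 := fun n => by rw [pow_zero, Ideal.one_eq_top]; trivial
  refine ⟨fun n => Nat.findGreatest (fun r => a n ∈ m ^ r) n, tendsto_atTop.mpr fun r => ?_,
    fun n => Nat.findGreatest_spec (P := fun r => a n ∈ m ^ r) (Nat.zero_le n) (h₀ n)⟩
  exact ((ha r).and (eventually_ge_atTop r)).mono fun n h => Nat.le_findGreatest h.2 h.1

theorem nullSequences_inf_smul_top_le [IsNoetherianRing A] (m J : Ideal A) :
    nullSequences m ⊓ J • ⊤ ≤ J • nullSequences m := by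
  rintro a ⟨ha, haJ⟩
  obtain ⟨ρ, hρ, haρ⟩ := exists_tendsto_atTop_forall_mem_pow ha
  obtain ⟨l, f, hf⟩ :=
    Submodule.fg_iff_exists_fin_generating_family.mp (IsNoetherian.noetherian J)
  obtain rfl : J = Ideal.span (range f) := hf.symm
  obtain ⟨k, hk⟩ := m.exists_pow_inf_le_mul_pow_sub (Ideal.span (range f))
  have hJ : ∀ n, a n ∈ Ideal.span (range f) * m ^ (ρ n - k) := fun n =>
    hk (ρ n) ⟨haρ n, by
      simpa [Ideal.smul_eq_mul, Ideal.mul_top] using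
        (Submodule.mem_smul_top_pi_iff (Submodule.fg_span (finite_range f))).mp haJ n⟩
  choose u hu hau using fun n => (Submodule.mem_span_range_smul_iff f _).mp (hJ n)
  refine (Submodule.mem_span_range_smul_iff f _).mpr
    ⟨fun i n => u n i, fun i r => ?_, funext fun n => by simpa [Finset.sum_apply] using hau n⟩
  filter_upwards [tendsto_atTop.mp hρ (r + k)] with n hn
  exact Ideal.pow_le_pow_right (by omega) (hu n i)

theorem mem_nullSequencesQuot_iff_eventually {m : Ideal A} {I : ℕ → Ideal A}
    {x : ∀ n, A ⧸ I n} : x ∈ nullSequencesQuot A m I ↔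
      ∀ i : ℕ, ∀ᶠ n in atTop, x n ∈ m ^ i • (⊤ : Submodule A (A ⧸ I n)) := by
  simp only [eventually_atTop]
  rfl

theorem iInf_sup_smul_top_eq_nullSequencesQuot (I : ℕ → Ideal A) {m : Ideal A} (hm : m.FG) :
    ⨅ r : ℕ, (⨆ n, LinearMap.range (LinearMap.single A (fun n => A ⧸ I n) n)) ⊔
        m ^ r • (⊤ : Submodule A (∀ n, A ⧸ I n)) = nullSequencesQuot A m I := by
  classical
  ext x
  simp only [Submodule.mem_iInf, mem_nullSequencesQuot_iff_eventually]
  refine forall_congr' fun r => ⟨fun hx => ?_, fun hx => ?_⟩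
  · obtain ⟨y, hy, z, hz, rfl⟩ := Submodule.mem_sup.mp hx
    have hy0 : ∀ᶠ n in atTop, y n = 0 := by
      simpa [Nat.cofinite_eq_atTop] using
        (Submodule.mem_iSup_range_single_iff.mp hy).eventually_cofinite_notMem
    filter_upwards [hy0] with n hn
    simpa [hn] using (Submodule.mem_smul_top_pi_iff hm.pow).mp hz n
  · obtain ⟨N, hN⟩ := eventually_atTop.mp hx
    let y : ∀ n, A ⧸ I n := fun n => if n < N then x n else 0
    have hy : y ∈ ⨆ n, LinearMap.range (LinearMap.single A (fun n => A ⧸ I n) n) :=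
      Submodule.mem_iSup_range_single_iff.mpr ((finite_lt_nat N).subset fun n hn => by
        by_contra h; exact hn (if_neg h))
    refine Submodule.mem_sup.mpr ⟨y, hy, x - y, (Submodule.mem_smul_top_pi_iff hm.pow).mpr
      fun n => ?_, add_sub_cancel y x⟩
    by_cases hn : n < N
    · simp [y, hn]
    · simpa [y, hn] using hN n (not_lt.mp hn)

theorem comap_piMap_mkQ_nullSequencesQuot {m : Ideal A} {I : ℕ → Ideal A}
    (hlim : ∀ i : ℕ, ∀ᶠ n in atTop, I n ≤ m ^ i) :
    (nullSequencesQuot A m I).comap (LinearMap.piMap fun n => (I n).mkQ) = nullSequences m := by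
  ext c
  simp only [Submodule.mem_comap, mem_nullSequencesQuot_iff_eventually, LinearMap.coe_piMap,
    Pi.map_apply, Submodule.mkQ_apply, Submodule.Quotient.mk_mem_smul_top_iff]
  refine forall_congr' fun i => ⟨fun hc => ?_, fun hc => ?_⟩
  · filter_upwards [hc, hlim i] with n hcn hIn using sup_le le_rfl hIn hcn
  · filter_upwards [hc] with n hcn using Ideal.mem_sup_left hcn

theorem flat_quotient_nullSequencesQuot [IsNoetherianRing A] {m : Ideal A} {I : ℕ → Ideal A}
    (hlim : ∀ i : ℕ, ∀ᶠ n in atTop, I n ≤ m ^ i) :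
    Module.Flat A ((∀ n, A ⧸ I n) ⧸ nullSequencesQuot A m I) := by
  let π := (nullSequencesQuot A m I).mkQ ∘ₗ LinearMap.piMap fun n => (I n).mkQ
  have hπ : Function.Surjective π :=
    (Submodule.mkQ_surjective _).comp <| .piMap fun _ => Submodule.mkQ_surjective _
  have hker : LinearMap.ker π = nullSequences m := by
    rw [LinearMap.ker_comp, Submodule.ker_mkQ, comap_piMap_mkQ_nullSequencesQuot hlim]
  have := Module.Flat.pi_of_isNoetherianRing (R := A) ℕ
  have := Module.Flat.quotient_of_inf_smul_le (nullSequences m)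
    fun J _ => nullSequences_inf_smul_top_le m J
  exact Module.Flat.of_linearEquiv
    ((Submodule.quotEquivOfEq _ _ hker.symm).trans (π.quotKerEquivOfSurjective hπ)).symm

end NullSequences

theorem closure_eq_nullSequences_and_flat_general
    {A : Type u} [CommRing A] [IsNoetherianRing A] [IsLocalRing A]
    (I : ℕ → Ideal A)
    (hlim : ∀ i : ℕ, ∃ N : ℕ, ∀ n ≥ N, I n ≤ IsLocalRing.maximalIdeal A ^ i)
    (S : Submodule A ((n : ℕ) → A ⧸ I n))
    (hS : S = ⨆ n, LinearMap.range (LinearMap.single A (fun n => A ⧸ I n) n)) :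
    (⨅ r : ℕ,
        S ⊔ IsLocalRing.maximalIdeal A ^ r • (⊤ : Submodule A ((n : ℕ) → A ⧸ I n)))
      = nullSequencesQuot A (IsLocalRing.maximalIdeal A) I ∧
    Module.Flat A (((n : ℕ) → A ⧸ I n) ⧸
      nullSequencesQuot A (IsLocalRing.maximalIdeal A) I) := by
  subst hS
  exact ⟨iInf_sup_smul_top_eq_nullSequencesQuot I (IsNoetherian.noetherian _),
    flat_quotient_nullSequencesQuot fun i => eventually_atTop.mpr (hlim i)⟩

/-- Let `(A, m)` be a Noetherian local domain, `I₁, I₂, …` nonzero ideals with `lim Iₙ = 0`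
`m`-adically, `P = ∏ₙ A/Iₙ`, `S = ⊕ₙ A/Iₙ`.  Then the `m`-adic closure
`S̄ = ⋂ᵣ (S + mʳP)` of `S` in `P` is exactly the submodule of null sequences, and `P/S̄` is
a flat `A`-module. -/
theorem closure_eq_nullSequences_and_flat
    {A : Type u} [CommRing A] [IsDomain A] [IsNoetherianRing A] [IsLocalRing A]
    (I : ℕ → Ideal A) (hne : ∀ n, I n ≠ ⊥)
    (hlim : ∀ i : ℕ, ∃ N : ℕ, ∀ n ≥ N, I n ≤ IsLocalRing.maximalIdeal A ^ i)
    (S : Submodule A ((n : ℕ) → A ⧸ I n))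
    (hS : S = ⨆ n, LinearMap.range (LinearMap.single A (fun n => A ⧸ I n) n)) :
    (⨅ r : ℕ,
        S ⊔ IsLocalRing.maximalIdeal A ^ r • (⊤ : Submodule A ((n : ℕ) → A ⧸ I n)))
      = nullSequencesQuot A (IsLocalRing.maximalIdeal A) I ∧
    Module.Flat A (((n : ℕ) → A ⧸ I n) ⧸
      nullSequencesQuot A (IsLocalRing.maximalIdeal A) I) :=
  closure_eq_nullSequences_and_flat_general I hlim S hS
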